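/- arXiv:1502.01620 — 2 statements merged into one kernel-verified Lean document; each statement's English description precedes it below -/
import Mathlib

section
/- Let ℰ be an F-expectation satisfying (H1). Then for every X, Y ∈ L²(F_T) and every t ∈ [0,T], |ℰ[X|F_t] − ℰ[Y|F_t]| ≤ E^{φ}[|X−Y| | F_t] almost surely. -/
open MeasureTheory ProbabilityTheory Set Filter
open scoped ENNReal NNReal RealInnerProductSpace Topology

noncomputable section

/-- A complete probability space `(Ω, m0, P)` carrying a `d`-dimensional standard Brownian
motion `B` with time horizon `T > 0`, together with its (augmented natural) filtration `ℱ` and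
an (abstract) Itô stochastic integral `stochInt Z s t = ∫_s^t Z_r dB_r`, characterized by its
usual properties (additivity, measurability, vanishing conditional expectation, Itô isometry,
and its value on constant integrands). -/
structure BrownianSetting (Ω : Type*) [m0 : MeasurableSpace Ω] (P : Measure Ω)
    (d : ℕ) (T : ℝ) : Type _ where
  prob : IsProbabilityMeasure P
  hT : 0 < T
  ℱ : Filtration ℝ m0
  B : ℝ → Ω → EuclideanSpace ℝ (Fin d)
  B_cont : ∀ ω, Continuous fun t => B t ω
  B_zero : ∀ᵐ ω ∂P, B 0 ω = 0
  B_adapted : Adapted ℱ B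
  B_indep : ∀ s t : ℝ, 0 ≤ s → s ≤ t →
    Indep (MeasurableSpace.comap (fun ω => B t ω - B s ω) inferInstance) (ℱ s) P
  B_gauss : ∀ s t : ℝ, 0 ≤ s → s ≤ t → ∀ u : EuclideanSpace ℝ (Fin d),
    P.map (fun ω => ⟪u, B t ω - B s ω⟫) =
      gaussianReal 0 (Real.toNNReal (‖u‖ ^ 2 * (t - s)))
  stochInt : (ℝ → Ω → EuclideanSpace ℝ (Fin d)) → ℝ → ℝ → Ω → ℝ
  stochInt_add : ∀ Z (s t u : ℝ), s ≤ t → t ≤ u →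
    ∀ᵐ ω ∂P, stochInt Z s t ω + stochInt Z t u ω = stochInt Z s u ω
  stochInt_meas : ∀ Z (s t : ℝ), ProgMeasurable ℱ Z →
    StronglyMeasurable[ℱ t] (stochInt Z s t)
  stochInt_condexp : ∀ Z (s t : ℝ), 0 ≤ s → s ≤ t → ProgMeasurable ℱ Z →
    (∫⁻ ω, (∫⁻ r in Ioc s t, ((‖Z r ω‖₊ : ℝ≥0∞)) ^ 2 ∂volume) ∂P) < ⊤ →
    P[stochInt Z s t|ℱ s] =ᵐ[P] 0
  stochInt_isometry : ∀ Z (s t : ℝ), 0 ≤ s → s ≤ t → ProgMeasurable ℱ Z →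
    (∫⁻ ω, ((‖stochInt Z s t ω‖₊ : ℝ≥0∞)) ^ 2 ∂P)
      = ∫⁻ ω, (∫⁻ r in Ioc s t, ((‖Z r ω‖₊ : ℝ≥0∞)) ^ 2 ∂volume) ∂P
  stochInt_const : ∀ (z : EuclideanSpace ℝ (Fin d)) (s t : ℝ),
    ∀ᵐ ω ∂P, stochInt (fun _ _ => z) s t ω = ⟪z, B t ω - B s ω⟫

variable {Ω : Type*} [m0 : MeasurableSpace Ω] {P : Measure Ω} {d : ℕ} {T : ℝ}

/-- `X ∈ L²(m)`: square-integrable and `m`-measurable. -/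
def MemL2 (P : Measure Ω) (m : MeasurableSpace Ω) (X : Ω → ℝ) : Prop :=
  MemLp X 2 P ∧ StronglyMeasurable[m] X

/-- `X ∈ L^∞(m)`: essentially bounded and `m`-measurable. -/
def MemLinf (P : Measure Ω) (m : MeasurableSpace Ω) (X : Ω → ℝ) : Prop :=
  StronglyMeasurable[m] X ∧ ∃ C : ℝ, ∀ᵐ ω ∂P, |X ω| ≤ C

/-- `φ : [0,∞) → [0,∞)` is continuous, subadditive, increasing, vanishes at `0` and has linear
growth `φ(x) ≤ ν (x + 1)`. -/
structure IsPhi (φ : ℝ → ℝ) (ν : ℝ) : Prop where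
  contOn : ContinuousOn φ (Ici 0)
  nonneg : ∀ x ∈ Ici (0 : ℝ), 0 ≤ φ x
  monoOn : MonotoneOn φ (Ici 0)
  subadd : ∀ x ∈ Ici (0 : ℝ), ∀ y ∈ Ici (0 : ℝ), φ (x + y) ≤ φ x + φ y
  zero : φ 0 = 0
  nu_pos : 0 < ν
  growth : ∀ x ∈ Ici (0 : ℝ), φ x ≤ ν * (x + 1)

/-- `(Y, Z)` is a square-integrable solution (with `Y ∈ S²_F(0,T)`, `Z ∈ L²_F(0,T;ℝ^d)`) of the
BSDE `Y_t = ξ + ∫_t^T h(s, ·, Z_s) ds − ∫_t^T Z_s dB_s`, `t ∈ [0,T]`. -/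
def IsBSDESol (S : BrownianSetting Ω P d T)
    (h : ℝ → Ω → EuclideanSpace ℝ (Fin d) → ℝ) (ξ : Ω → ℝ)
    (Y : ℝ → Ω → ℝ) (Z : ℝ → Ω → EuclideanSpace ℝ (Fin d)) : Prop :=
  Adapted S.ℱ Y ∧ ProgMeasurable S.ℱ Z ∧
  (∀ ω, ContinuousOn (fun t => Y t ω) (Icc 0 T)) ∧
  MemLp (fun ω => ⨆ t ∈ Icc (0 : ℝ) T, |Y t ω|) 2 P ∧
  (∫⁻ ω, (∫⁻ r in Ioc 0 T, ((‖Z r ω‖₊ : ℝ≥0∞)) ^ 2 ∂volume) ∂P) < ⊤ ∧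
  ∀ t ∈ Icc (0 : ℝ) T, ∀ᵐ ω ∂P,
    Y t ω = ξ ω + (∫ s in Ioc t T, h s ω (Z s ω)) - S.stochInt Z t T ω

/-- A filtration-consistent nonlinear expectation (`F`-expectation): a system of operators
`E t : L²(F_T) → L²(F_t)`, `t ∈ [0,T]`, which is monotone, preserves `F_t`-measurable random
variables, is time-consistent, and satisfies the 0-1 law. -/
structure FExpectation (Ω : Type*) [m0 : MeasurableSpace Ω] (P : Measure Ω)
    (T : ℝ) (ℱ : Filtration ℝ m0) where
  E : ℝ → (Ω → ℝ) → Ω → ℝ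
  maps_L2 : ∀ t ∈ Icc (0 : ℝ) T, ∀ X, MemL2 P (ℱ T) X → MemL2 P (ℱ t) (E t X)
  congr : ∀ t ∈ Icc (0 : ℝ) T, ∀ X X' : Ω → ℝ, X =ᵐ[P] X' → E t X =ᵐ[P] E t X'
  mono : ∀ t ∈ Icc (0 : ℝ) T, ∀ X Y : Ω → ℝ, MemL2 P (ℱ T) X → MemL2 P (ℱ T) Y →
    (∀ᵐ ω ∂P, Y ω ≤ X ω) → ∀ᵐ ω ∂P, E t Y ω ≤ E t X ω
  const_pres : ∀ t ∈ Icc (0 : ℝ) T, ∀ X, MemL2 P (ℱ t) X → E t X =ᵐ[P] X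
  tower : ∀ s t : ℝ, 0 ≤ s → s ≤ t → t ≤ T → ∀ X, MemL2 P (ℱ T) X →
    E s (E t X) =ᵐ[P] E s X
  zero_one : ∀ t ∈ Icc (0 : ℝ) T, ∀ X, MemL2 P (ℱ T) X → ∀ A : Set Ω,
    MeasurableSet[ℱ t] A → E t (A.indicator X) =ᵐ[P] A.indicator (E t X)

/-- Condition (H1): the `F`-expectation `ℰ` is dominated by the `g`-expectation `E^φ` with
generator `φ(|z|)`: for all `X, Y ∈ L²(F_T)` and `t ∈ [0,T]`,
`ℰ[X|F_t] − ℰ[Y|F_t] ≤ E^φ[X − Y|F_t]` a.s. -/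
def SatisfiesH1 (S : BrownianSetting Ω P d T) (φ : ℝ → ℝ)
    (ℰ : FExpectation Ω P T S.ℱ) : Prop :=
  ∀ X Y : Ω → ℝ, MemL2 P (S.ℱ T) X → MemL2 P (S.ℱ T) Y →
    ∀ t ∈ Icc (0 : ℝ) T, ∀ Yφ Zφ,
      IsBSDESol S (fun _ _ z => φ ‖z‖) (fun ω => X ω - Y ω) Yφ Zφ →
      ∀ᵐ ω ∂P, ℰ.E t X ω - ℰ.E t Y ω ≤ Yφ t ω

/-- A real function is RCLL (right-continuous with left limits) on `[a,b]`. -/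
def IsRCLLOn (f : ℝ → ℝ) (a b : ℝ) : Prop :=
  (∀ t ∈ Ico a b, ContinuousWithinAt f (Ici t) t) ∧
  (∀ t ∈ Ioc a b, ∃ l : ℝ, Tendsto f (𝓝[<] t) (𝓝 l))

/-- `Y` is an `ℰ`-supermartingale on `[0,T]`. -/
def IsESupermartingale (S : BrownianSetting Ω P d T) (ℰ : FExpectation Ω P T S.ℱ)
    (Y : ℝ → Ω → ℝ) : Prop :=
  (∀ t ∈ Icc (0 : ℝ) T, MemL2 P (S.ℱ t) (Y t)) ∧
  ∀ s t : ℝ, 0 ≤ s → s ≤ t → t ≤ T → ∀ᵐ ω ∂P, ℰ.E s (Y t) ω ≤ Y s ω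

/-- `Y` is an `ℰ`-submartingale on `[0,T]`. -/
def IsESubmartingale (S : BrownianSetting Ω P d T) (ℰ : FExpectation Ω P T S.ℱ)
    (Y : ℝ → Ω → ℝ) : Prop :=
  (∀ t ∈ Icc (0 : ℝ) T, MemL2 P (S.ℱ t) (Y t)) ∧
  ∀ s t : ℝ, 0 ≤ s → s ≤ t → t ≤ T → ∀ᵐ ω ∂P, Y s ω ≤ ℰ.E s (Y t) ω

/-- `Y` is an `ℰ`-martingale on `[0,T]`. -/
def IsEMartingale (S : BrownianSetting Ω P d T) (ℰ : FExpectation Ω P T S.ℱ)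
    (Y : ℝ → Ω → ℝ) : Prop :=
  (∀ t ∈ Icc (0 : ℝ) T, MemL2 P (S.ℱ t) (Y t)) ∧
  ∀ s t : ℝ, 0 ≤ s → s ≤ t → t ≤ T → ∀ᵐ ω ∂P, ℰ.E s (Y t) ω = Y s ω

/-- `y` solves the BSDE `ℰ(f,T,X,z)` under the `F`-expectation `ℰ`:
`y_t + z·B_t = ℰ[X + z·B_T + ∫_t^T f(s, y_s) ds | F_t]` for all `t ∈ [0,T]`,
with `y` continuous and adapted. -/
def SolvesEBSDE (S : BrownianSetting Ω P d T) (ℰ : FExpectation Ω P T S.ℱ)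
    (f : ℝ → Ω → ℝ → ℝ) (X : Ω → ℝ) (z : EuclideanSpace ℝ (Fin d))
    (y : ℝ → Ω → ℝ) : Prop :=
  Adapted S.ℱ y ∧ (∀ ω, ContinuousOn (fun t => y t ω) (Icc 0 T)) ∧
  ∀ t ∈ Icc (0 : ℝ) T, ∀ᵐ ω ∂P,
    y t ω + ⟪z, S.B t ω⟫ =
      ℰ.E t (fun ω' => X ω' + ⟪z, S.B T ω'⟫ + ∫ s in Ioc t T, f s ω' (y s ω')) ω

/-- `y ∈ S^∞_F(0,T)`-type uniform bound. -/
def BddUnif (P : Measure Ω) (T : ℝ) (y : ℝ → Ω → ℝ) : Prop :=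
  ∃ C : ℝ, ∀ t ∈ Icc (0 : ℝ) T, ∀ᵐ ω ∂P, |y t ω| ≤ C

/-- `(g, Z) ∈ L²_F(0,T) × L²_F(0,T;ℝ^d)` represents the `ℰ`-martingale `t ↦ ℰ[X|F_t]`:
`|g_t| ≤ φ(|Z_t|)` and `ℰ[X|F_t] = X + ∫_t^T g_s ds − ∫_t^T Z_s dB_s`. -/
def RepPair (S : BrownianSetting Ω P d T) (ℰ : FExpectation Ω P T S.ℱ) (φ : ℝ → ℝ)
    (X : Ω → ℝ) (g : ℝ → Ω → ℝ) (Z : ℝ → Ω → EuclideanSpace ℝ (Fin d)) : Prop :=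
  ProgMeasurable S.ℱ g ∧ ProgMeasurable S.ℱ Z ∧
  (∫⁻ ω, (∫⁻ r in Ioc 0 T, ((‖g r ω‖₊ : ℝ≥0∞)) ^ 2 ∂volume) ∂P) < ⊤ ∧
  (∫⁻ ω, (∫⁻ r in Ioc 0 T, ((‖Z r ω‖₊ : ℝ≥0∞)) ^ 2 ∂volume) ∂P) < ⊤ ∧
  (∀ᵐ r ∂volume.restrict (Ioc (0 : ℝ) T), ∀ᵐ ω ∂P, |g r ω| ≤ φ ‖Z r ω‖) ∧
  ∀ t ∈ Icc (0 : ℝ) T, ∀ᵐ ω ∂P,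
    ℰ.E t X ω = X ω + (∫ s in Ioc t T, g s ω) - S.stochInt Z t T ω

theorem MemL2.add {α : Type*} {m : MeasurableSpace α} [MeasurableSpace α] {μ : Measure α}
    {X Y : α → ℝ} (hX : MemL2 μ m X) (hY : MemL2 μ m Y) : MemL2 μ m (fun a => X a + Y a) :=
  ⟨hX.1.add hY.1, hX.2.add hY.2⟩

theorem MemL2.abs_sub {α : Type*} {m : MeasurableSpace α} [MeasurableSpace α] {μ : Measure α}
    {X Y : α → ℝ} (hX : MemL2 μ m X) (hY : MemL2 μ m Y) : MemL2 μ m (fun a => |X a - Y a|) :=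
  ⟨(hX.1.sub hY.1).abs, (hX.2.sub hY.2).norm⟩

theorem SatisfiesH1.fexp_sub_le_gexp_abs {S : BrownianSetting Ω P d T} {φ : ℝ → ℝ}
    {ℰ : FExpectation Ω P T S.ℱ} (hH1 : SatisfiesH1 S φ ℰ) {X Y : Ω → ℝ}
    (hX : MemL2 P (S.ℱ T) X) (hY : MemL2 P (S.ℱ T) Y) {t : ℝ} (ht : t ∈ Icc (0 : ℝ) T)
    {Yφ : ℝ → Ω → ℝ} {Zφ : ℝ → Ω → EuclideanSpace ℝ (Fin d)}
    (hsol : IsBSDESol S (fun _ _ z => φ ‖z‖) (fun ω => |X ω - Y ω|) Yφ Zφ) :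
    ∀ᵐ ω ∂P, ℰ.E t X ω - ℰ.E t Y ω ≤ Yφ t ω := by
  -- `X ≤ Y + |X - Y|`, and (H1) for the pair `(Y + |X - Y|, Y)` has terminal value `|X - Y|`.
  have hYA : MemL2 P (S.ℱ T) (fun ω => Y ω + |X ω - Y ω|) := hY.add (hX.abs_sub hY)
  have hmono : ∀ᵐ ω ∂P, ℰ.E t X ω ≤ ℰ.E t (fun ω => Y ω + |X ω - Y ω|) ω :=
    ℰ.mono t ht _ _ hYA hX <| .of_forall fun ω => by linarith [le_abs_self (X ω - Y ω)]
  have hdom := hH1 _ Y hYA hY t ht Yφ Zφ (by simpa only [add_sub_cancel_left] using hsol)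
  filter_upwards [hmono, hdom] with ω hmono hdom
  linarith

theorem abs_fexp_diff_le_gexp_abs_general
    {Ω : Type*} [m0 : MeasurableSpace Ω] {P : Measure Ω} {d : ℕ} {T : ℝ}
    (S : BrownianSetting Ω P d T) (φ : ℝ → ℝ)
    (ℰ : FExpectation Ω P T S.ℱ) (hH1 : SatisfiesH1 S φ ℰ)
    (X Y : Ω → ℝ) (hX : MemL2 P (S.ℱ T) X) (hY : MemL2 P (S.ℱ T) Y)
    (t : ℝ) (ht : t ∈ Icc (0 : ℝ) T)
    (Yφ : ℝ → Ω → ℝ) (Zφ : ℝ → Ω → EuclideanSpace ℝ (Fin d))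
    (hsol : IsBSDESol S (fun _ _ z => φ ‖z‖) (fun ω => |X ω - Y ω|) Yφ Zφ) :
    ∀ᵐ ω ∂P, |ℰ.E t X ω - ℰ.E t Y ω| ≤ Yφ t ω := by
  have hXY := hH1.fexp_sub_le_gexp_abs hX hY ht hsol
  have hYX := hH1.fexp_sub_le_gexp_abs hY hX ht (by simpa only [abs_sub_comm] using hsol)
  filter_upwards [hXY, hYX] with ω hXY hYX
  exact abs_sub_le_iff.mpr ⟨hXY, hYX⟩

/-- under (H1), `|ℰ[X|F_t] − ℰ[Y|F_t]| ≤ E^{φ}[|X−Y| | F_t]` a.s. -/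
theorem abs_fexp_diff_le_gexp_abs
    {Ω : Type*} [m0 : MeasurableSpace Ω] {P : Measure Ω} {d : ℕ} {T : ℝ}
    (S : BrownianSetting Ω P d T) (φ : ℝ → ℝ) (ν : ℝ) (hφ : IsPhi φ ν)
    (ℰ : FExpectation Ω P T S.ℱ) (hH1 : SatisfiesH1 S φ ℰ)
    (X Y : Ω → ℝ) (hX : MemL2 P (S.ℱ T) X) (hY : MemL2 P (S.ℱ T) Y)
    (t : ℝ) (ht : t ∈ Icc (0 : ℝ) T)
    (Yφ : ℝ → Ω → ℝ) (Zφ : ℝ → Ω → EuclideanSpace ℝ (Fin d))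
    (hsol : IsBSDESol S (fun _ _ z => φ ‖z‖) (fun ω => |X ω - Y ω|) Yφ Zφ) :
    ∀ᵐ ω ∂P, |ℰ.E t X ω - ℰ.E t Y ω| ≤ Yφ t ω :=
  abs_fexp_diff_le_gexp_abs_general (m0 := m0) S φ ℰ hH1 X Y hX hY t ht Yφ Zφ hsol
end
end

section
/- Local property at stopping times: let ℰ be an F-expectation satisfying (H1), σ a stopping time with values in [0,T], and X, Y ∈ L²(F_T). Then for every A ∈ F_σ, 1_A ℰ[X + Y | F_σ] = 1_A ℰ[1_A X + Y | F_σ] almost surely. -/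
open MeasureTheory ProbabilityTheory Set Filter
open scoped ENNReal NNReal RealInnerProductSpace Topology

noncomputable section

variable {Ω : Type*} [m0 : MeasurableSpace Ω] {P : Measure Ω} {d : ℕ} {T : ℝ}

/-! For a deterministic time `t`, the 0-1 law makes `ℰ[·|F_t]` local: on an `F_t`-event where
the two terminal values agree, so do their conditional values. For `A ∈ F_σ`, the event
`A ∩ {t - δ < σ ≤ t}` lies in `F_t`, so `V₁ t = V₂ t` a.s. there. Along the dyadic grids of mesh
`T / 2ⁿ`, the grid point `σₙ ≥ σ` nearest to `σ` hence satisfies `V₁ σₙ = V₂ σₙ` a.s. on `A`, and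
`σₙ ↓ σ` together with right-continuity of the paths gives `V₁ σ = V₂ σ` on `A`. -/

namespace FExpectation

variable {ℱ : Filtration ℝ m0}

theorem ae_eq_of_eqOn (ℰ : FExpectation Ω P T ℱ) {t : ℝ} (ht : t ∈ Icc 0 T) {X X' : Ω → ℝ}
    (hX : MemL2 P (ℱ T) X) (hX' : MemL2 P (ℱ T) X') {B : Set Ω} (hB : MeasurableSet[ℱ t] B)
    (hXX' : EqOn X X' B) : ∀ᵐ ω ∂P, ω ∈ B → ℰ.E t X ω = ℰ.E t X' ω := by
  have hind : B.indicator (ℰ.E t X) =ᵐ[P] B.indicator (ℰ.E t X') := by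
    refine (ℰ.zero_one t ht X hX B hB).symm.trans ?_
    rw [indicator_congr hXX']
    exact ℰ.zero_one t ht X' hX' B hB
  filter_upwards [hind] with ω hω hωB
  simpa only [indicator_of_mem hωB] using hω

end FExpectation

theorem MeasureTheory.IsStoppingTime.measurableSet_inter_preimage_Ioc {ι : Type*} [LinearOrder ι]
    {ℱ : Filtration ι m0} {τ : Ω → ι} (hτ : IsStoppingTime ℱ fun ω => (τ ω : WithTop ι))
    {A : Set Ω} (hA : MeasurableSet[hτ.measurableSpace] A) {s t : ι} (hst : s ≤ t) :
    MeasurableSet[ℱ t] (A ∩ τ ⁻¹' Ioc s t) := by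
  have hle : MeasurableSet[ℱ t] (A ∩ {ω | τ ω ≤ t}) := by
    simpa only [WithTop.coe_le_coe] using hA.2 t
  have hgt : MeasurableSet[ℱ t] {ω | s < τ ω} :=
    ℱ.mono hst _ (by simpa only [WithTop.coe_lt_coe] using hτ.measurableSet_gt s)
  convert hle.inter hgt using 1
  ext ω
  simp only [mem_inter_iff, mem_preimage, mem_Ioc, mem_ofPred_eq]
  tauto

def gridCeil (δ s : ℝ) : ℝ := ⌈s / δ⌉₊ * δ

section gridCeil

variable {δ s : ℝ}

theorem le_gridCeil (hδ : 0 < δ) : s ≤ gridCeil δ s :=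
  (div_le_iff₀ hδ).1 (Nat.le_ceil _)

theorem gridCeil_lt (hδ : 0 < δ) (hs : 0 ≤ s) : gridCeil δ s < s + δ := by
  have h := Nat.ceil_lt_add_one (div_nonneg hs hδ.le)
  calc gridCeil δ s < (s / δ + 1) * δ := mul_lt_mul_of_pos_right h hδ
    _ = s + δ := by field_simp

theorem gridCeil_le (hδ : 0 < δ) {N : ℕ} (hs : s ≤ N * δ) : gridCeil δ s ≤ N * δ :=
  mul_le_mul_of_nonneg_right (by exact_mod_cast Nat.ceil_le.2 ((div_le_iff₀ hδ).2 hs)) hδ.le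

theorem mem_Ioc_gridCeil (hδ : 0 < δ) (hs : 0 ≤ s) :
    s ∈ Ioc (gridCeil δ s - δ) (gridCeil δ s) :=
  ⟨by linarith [gridCeil_lt hδ hs], le_gridCeil hδ⟩

theorem tendsto_gridCeil {δ : ℕ → ℝ} (hδ : ∀ n, 0 < δ n) (hδ0 : Tendsto δ atTop (𝓝 0))
    (hs : 0 ≤ s) : Tendsto (fun n => gridCeil (δ n) s) atTop (𝓝[≥] s) := by
  have hupper : Tendsto (fun n => s + δ n) atTop (𝓝 s) := by
    simpa using tendsto_const_nhds.add hδ0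
  refine tendsto_nhdsWithin_of_tendsto_nhds_of_eventually_within _
    (tendsto_of_tendsto_of_tendsto_of_le_of_le tendsto_const_nhds hupper
      (fun n => le_gridCeil (hδ n)) (fun n => (gridCeil_lt (hδ n) hs).le)) ?_
  exact Eventually.of_forall fun n => le_gridCeil (hδ n)

theorem natCast_two_pow_mul_div (T : ℝ) (n : ℕ) : ((2 ^ n : ℕ) : ℝ) * (T / 2 ^ n) = T := by
  push_cast
  field_simp

theorem tendsto_div_two_pow (T : ℝ) : Tendsto (fun n : ℕ => T / 2 ^ n) atTop (𝓝 0) := by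
  simpa using tendsto_const_nhds.div_atTop (tendsto_pow_atTop_atTop_of_one_lt one_lt_two)

theorem eq_of_forall_eq_gridCeil {f g : ℝ → ℝ} (hT : 0 < T) (hs : s ∈ Icc 0 T)
    (hf : ∀ t ∈ Ico 0 T, ContinuousWithinAt f (Ici t) t)
    (hg : ∀ t ∈ Ico 0 T, ContinuousWithinAt g (Ici t) t)
    (h : ∀ n : ℕ, f (gridCeil (T / 2 ^ n) s) = g (gridCeil (T / 2 ^ n) s)) : f s = g s := by
  have hδ : ∀ n : ℕ, 0 < T / 2 ^ n := fun n => by positivity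
  rcases hs.2.lt_or_eq with hsT | hsT
  · have hlim := tendsto_gridCeil hδ (tendsto_div_two_pow T) hs.1
    exact tendsto_nhds_unique ((hf s ⟨hs.1, hsT⟩).tendsto.comp hlim)
      (((hg s ⟨hs.1, hsT⟩).tendsto.comp hlim).congr fun n => (h n).symm)
  · have hgrid : gridCeil (T / 2 ^ 0) s = s := by
      have hle := gridCeil_le (hδ 0) ((natCast_two_pow_mul_div T 0).symm ▸ hs.2)
      rw [natCast_two_pow_mul_div] at hle
      exact le_antisymm (hle.trans hsT.ge) (le_gridCeil (hδ 0))
    simpa only [hgrid] using h 0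

end gridCeil

theorem ae_eq_at_of_ae_eq_on_Ioc {U W : ℝ → Ω → ℝ} {σ : Ω → ℝ} {A : Set Ω} (hT : 0 < T)
    (hσT : ∀ ω, σ ω ∈ Icc 0 T)
    (hU : ∀ ω, ∀ t ∈ Ico 0 T, ContinuousWithinAt (fun t => U t ω) (Ici t) t)
    (hW : ∀ ω, ∀ t ∈ Ico 0 T, ContinuousWithinAt (fun t => W t ω) (Ici t) t)
    (hloc : ∀ t ∈ Icc 0 T, ∀ s ≤ t, ∀ᵐ ω ∂P, ω ∈ A → σ ω ∈ Ioc s t → U t ω = W t ω) :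
    ∀ᵐ ω ∂P, ω ∈ A → U (σ ω) ω = W (σ ω) ω := by
  have hδ : ∀ n : ℕ, 0 < T / 2 ^ n := fun n => by positivity
  have hgrid : ∀ᵐ ω ∂P, ∀ n : ℕ, ω ∈ A →
      U (gridCeil (T / 2 ^ n) (σ ω)) ω = W (gridCeil (T / 2 ^ n) (σ ω)) ω := by
    rw [ae_all_iff]
    intro n
    set δ := T / 2 ^ n
    have hpoints : ∀ᵐ ω ∂P, ∀ k : ℕ, (k : ℝ) * δ ∈ Icc 0 T → ω ∈ A →
        σ ω ∈ Ioc ((k : ℝ) * δ - δ) ((k : ℝ) * δ) → U (k * δ) ω = W (k * δ) ω := by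
      refine ae_all_iff.2 fun k => ?_
      by_cases hk : (k : ℝ) * δ ∈ Icc 0 T
      · filter_upwards [hloc _ hk _ (sub_le_self _ (hδ n).le)] with ω hω _ using hω
      · exact Eventually.of_forall fun ω hk' => absurd hk' hk
    filter_upwards [hpoints] with ω hω hωA
    have hmem : gridCeil δ (σ ω) ∈ Icc 0 T := by
      refine ⟨(hσT ω).1.trans (le_gridCeil (hδ n)), ?_⟩
      have hle := gridCeil_le (hδ n) ((natCast_two_pow_mul_div T n).symm ▸ (hσT ω).2)
      rwa [natCast_two_pow_mul_div] at hle
    exact hω _ hmem hωA (mem_Ioc_gridCeil (hδ n) (hσT ω).1)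
  filter_upwards [hgrid] with ω hω hωA
  exact eq_of_forall_eq_gridCeil hT (hσT ω) (hU ω) (hW ω) fun n => hω n hωA

theorem fexp_local_property_stopping_general
    {Ω : Type*} [m0 : MeasurableSpace Ω] {P : Measure Ω} {d : ℕ} {T : ℝ}
    (S : BrownianSetting Ω P d T)
    (ℰ : FExpectation Ω P T S.ℱ)
    (σ : Ω → ℝ) (hσ : IsStoppingTime S.ℱ (fun ω => (σ ω : WithTop ℝ))) (hσT : ∀ ω, σ ω ∈ Icc (0 : ℝ) T)
    (X Y : Ω → ℝ) (hX : MemL2 P (S.ℱ T) X) (hY : MemL2 P (S.ℱ T) Y)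
    (A : Set Ω) (hA : MeasurableSet[hσ.measurableSpace] A)
    (V₁ : ℝ → Ω → ℝ) (hV₁_rcll : ∀ ω, IsRCLLOn (fun t => V₁ t ω) 0 T)
    (hV₁ : ∀ t ∈ Icc (0 : ℝ) T, V₁ t =ᵐ[P] ℰ.E t (fun ω => X ω + Y ω))
    (V₂ : ℝ → Ω → ℝ) (hV₂_rcll : ∀ ω, IsRCLLOn (fun t => V₂ t ω) 0 T)
    (hV₂ : ∀ t ∈ Icc (0 : ℝ) T, V₂ t =ᵐ[P] ℰ.E t (fun ω => A.indicator X ω + Y ω)) :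
    ∀ᵐ ω ∂P, A.indicator (fun ω' => V₁ (σ ω') ω') ω
      = A.indicator (fun ω' => V₂ (σ ω') ω') ω := by
  have hAT : MeasurableSet[S.ℱ T] A :=
    hσ.measurableSpace_le_of_le_const (fun ω => WithTop.coe_le_coe.2 (hσT ω).2) A hA
  have hXY : MemL2 P (S.ℱ T) fun ω => X ω + Y ω := ⟨hX.1.add hY.1, hX.2.add hY.2⟩
  have hAXY : MemL2 P (S.ℱ T) fun ω => A.indicator X ω + Y ω :=
    ⟨(hX.1.indicator (S.ℱ.le T A hAT)).add hY.1, (hX.2.indicator hAT).add hY.2⟩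
  have hloc : ∀ t ∈ Icc 0 T, ∀ s ≤ t,
      ∀ᵐ ω ∂P, ω ∈ A → σ ω ∈ Ioc s t → V₁ t ω = V₂ t ω := by
    intro t ht s hst
    have hagree : EqOn (fun ω => X ω + Y ω) (fun ω => A.indicator X ω + Y ω)
        (A ∩ σ ⁻¹' Ioc s t) := fun ω hω => by simp only [indicator_of_mem hω.1]
    filter_upwards [hV₁ t ht, hV₂ t ht, ℰ.ae_eq_of_eqOn ht hXY hAXY
      (hσ.measurableSet_inter_preimage_Ioc hA hst) hagree] with ω h₁ h₂ hE hωA hωσ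
    rw [h₁, h₂, hE ⟨hωA, hωσ⟩]
  filter_upwards [ae_eq_at_of_ae_eq_on_Ioc S.hT hσT (fun ω => (hV₁_rcll ω).1)
    (fun ω => (hV₂_rcll ω).1) hloc] with ω hω
  by_cases hωA : ω ∈ A
  · simp only [indicator_of_mem hωA, hω hωA]
  · simp only [indicator_of_notMem hωA]

/-- local property at stopping times:
`1_A ℰ[X + Y|F_σ] = 1_A ℰ[1_A X + Y|F_σ]` a.s. for `A ∈ F_σ`; here `ℰ[ξ|F_σ] = V_σ` with
`V` the RCLL version of `t ↦ ℰ[ξ|F_t]`. -/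
theorem fexp_local_property_stopping
    {Ω : Type*} [m0 : MeasurableSpace Ω] {P : Measure Ω} {d : ℕ} {T : ℝ}
    (S : BrownianSetting Ω P d T) (φ : ℝ → ℝ) (ν : ℝ) (hφ : IsPhi φ ν)
    (ℰ : FExpectation Ω P T S.ℱ) (hH1 : SatisfiesH1 S φ ℰ)
    (σ : Ω → ℝ) (hσ : IsStoppingTime S.ℱ (fun ω => (σ ω : WithTop ℝ))) (hσT : ∀ ω, σ ω ∈ Icc (0 : ℝ) T)
    (X Y : Ω → ℝ) (hX : MemL2 P (S.ℱ T) X) (hY : MemL2 P (S.ℱ T) Y)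
    (A : Set Ω) (hA : MeasurableSet[hσ.measurableSpace] A)
    (V₁ : ℝ → Ω → ℝ) (hV₁_rcll : ∀ ω, IsRCLLOn (fun t => V₁ t ω) 0 T)
    (hV₁ : ∀ t ∈ Icc (0 : ℝ) T, V₁ t =ᵐ[P] ℰ.E t (fun ω => X ω + Y ω))
    (V₂ : ℝ → Ω → ℝ) (hV₂_rcll : ∀ ω, IsRCLLOn (fun t => V₂ t ω) 0 T)
    (hV₂ : ∀ t ∈ Icc (0 : ℝ) T, V₂ t =ᵐ[P] ℰ.E t (fun ω => A.indicator X ω + Y ω)) :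
    ∀ᵐ ω ∂P, A.indicator (fun ω' => V₁ (σ ω') ω') ω
      = A.indicator (fun ω' => V₂ (σ ω') ω') ω :=
  fexp_local_property_stopping_general (m0 := m0) S ℰ σ hσ hσT X Y hX hY A hA V₁ hV₁_rcll hV₁ V₂
    hV₂_rcll hV₂
end
end
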